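/- Suppose the parameters (C_{x,j,i}), x ∈ ℐ, satisfy the one-sidedness condition and energy consistency, extended to all of ℒ by C_{x,j} := 1 for x ∈ 𝒜 and C_{x,j} := 2/3 for x ∈ 𝒞. Then E_ac satisfies local force consistency for all potentials V ∈ 𝒱 — that is, Σ_{j=1}^6 Σ_{i=1}^6 (C_{x−a_i,j,i} − C_{x,j,i}) ∂_j V(F𝐚) = 0 for all x ∈ ℒ, all F ∈ ℝ^{2×2}, and all V ∈ 𝒱 — if and only if Σ_{i=1}^6 ( C_{x−a_i,j,i} − C_{x−a_i,j+3,i} − C_{x,j,i} + C_{x,j+3,i} ) = 0 for all j ∈ {1,2,3} and all x ∈ ℒ. -/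

import Mathlib

open Real
open scoped BigOperators Classical ENNReal

noncomputable section

namespace AC

/-- The plane `ℝ²` with the Euclidean norm. -/
abbrev E2 := EuclideanSpace ℝ (Fin 2)

/-- `2 × 2` real matrices. -/
abbrev Mat2 := Matrix (Fin 2) (Fin 2) ℝ

def toE2 (v : Fin 2 → ℝ) : E2 := WithLp.toLp 2 v

/-- The lattice directions `a_j = Q6^(j-1) a_1`, `Q6` the rotation by `π/3`. -/
def avec (j : ℤ) : E2 :=
  toE2 ![Real.cos (((j : ℝ) - 1) * (Real.pi / 3)), Real.sin (((j : ℝ) - 1) * (Real.pi / 3))]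

/-- The volume `Ω₀ = √3/2` of a primitive cell. -/
def Om0 : ℝ := Real.sqrt 3 / 2

/-- `𝐚 = (a_1, …, a_6)`. -/
def aFam : Fin 6 → E2 := fun j => avec ((j : ℕ) + 1)

/-- Matrix-vector multiplication on `E2`. -/
def mvec (F : Mat2) (v : E2) : E2 := toE2 fun i => ∑ k, F i k * v k

/-- `F𝐚 = (F a_1, …, F a_6)`. -/
def Famat (F : Mat2) : Fin 6 → E2 := fun j => mvec F (aFam j)

/-- Lattice coordinates (w.r.t. the basis `a_1, a_2`) of `a_j` (indices mod 6). -/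
def ed (j : ℤ) : ℤ × ℤ :=
  match (j % 6).toNat with
  | 1 => (1, 0)
  | 2 => (0, 1)
  | 3 => (-1, 1)
  | 4 => (-1, 0)
  | 5 => (0, -1)
  | _ => (1, -1)

/-- The lattice point `n₁ a₁ + n₂ a₂`; `ℒ = emb '' (ℤ × ℤ)`. -/
def emb (n : ℤ × ℤ) : E2 := (n.1 : ℝ) • avec 1 + (n.2 : ℝ) • avec 2

/-- Forward finite difference `D_j v(x) = v(x + a_j) - v(x)` in lattice coordinates. -/
def Dd (j : ℤ) (v : ℤ × ℤ → E2) (n : ℤ × ℤ) : E2 := v (n + ed j) - v n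

/-- `Dv(x) = (D_1 v(x), …, D_6 v(x))`. -/
def Dfam (y : ℤ × ℤ → E2) (n : ℤ × ℤ) : Fin 6 → E2 := fun j => Dd ((j : ℕ) + 1) y n

/-- Euclidean dot product. -/
def dotE (v w : E2) : ℝ := ∑ i, v i * w i

/-- Frobenius inner product `A : B`. -/
def frobI (A B : Mat2) : ℝ := ∑ i, ∑ k, A i k * B i k

/-- Frobenius norm. -/
def frobN (A : Mat2) : ℝ := Real.sqrt (∑ i, ∑ k, (A i k) ^ 2)

/-- Outer product `v ⊗ w`. -/
def outer (v w : E2) : Mat2 := fun i k => v i * w k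

/-- The element of `(ℝ²)⁶` with `k`-th standard basis vector in slot `j` and `0` elsewhere. -/
def unitv (j : Fin 6) (k : Fin 2) : Fin 6 → E2 := fun i => if i = j then toE2 (Pi.single k 1) else 0

/-- Partial gradient `∂_j V(g) ∈ ℝ²` of `V` with respect to its `j`-th argument. -/
def pd (V : (Fin 6 → E2) → ℝ) (j : Fin 6) (g : Fin 6 → E2) : E2 :=
  toE2 fun k => deriv (fun t : ℝ => V (g + t • unitv j k)) 0

/-- Second partial derivative `∂_{ij} V(g) ∈ ℝ^{2×2}`. -/
def pd2 (V : (Fin 6 → E2) → ℝ) (i j : Fin 6) (g : Fin 6 → E2) : Mat2 :=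
  fun k l => deriv (fun t : ℝ => pd V j (g + t • unitv i k) l) 0

/-- Third partial derivative `∂_{ijk} V(g)`. -/
def pd3 (V : (Fin 6 → E2) → ℝ) (i j k : Fin 6) (g : Fin 6 → E2) : Fin 2 → Fin 2 → Fin 2 → ℝ :=
  fun p q r => deriv (fun t : ℝ => pd2 V j k (g + t • unitv i p) q r) 0

/-- Operator norm of a matrix viewed as a bilinear form on `ℝ²`. -/
def matOpNorm (A : Mat2) : ℝ :=
  sSup {r : ℝ | ∃ h1 h2 : E2, ‖h1‖ = 1 ∧ ‖h2‖ = 1 ∧ r = ∑ k, ∑ l, A k l * h1 k * h2 l}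

/-- Norm of a trilinear form on `ℝ²`. -/
def t3norm (B : Fin 2 → Fin 2 → Fin 2 → ℝ) : ℝ :=
  sSup {r : ℝ | ∃ h1 h2 h3 : E2, ‖h1‖ = 1 ∧ ‖h2‖ = 1 ∧ ‖h3‖ = 1 ∧
    r = ∑ p, ∑ q, ∑ s, B p q s * h1 p * h2 q * h3 s}

/-- `M₂ = Σ_{i,j} sup_g ‖∂_{ij}V(g)‖`. -/
def M2 (V : (Fin 6 → E2) → ℝ) : ℝ :=
  ∑ i : Fin 6, ∑ j : Fin 6, ⨆ g : Fin 6 → E2, matOpNorm (pd2 V i j g)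

/-- `M₃ = Σ_{i,j,k} sup_g ‖∂_{ijk}V(g)‖`. -/
def M3 (V : (Fin 6 → E2) → ℝ) : ℝ :=
  ∑ i : Fin 6, ∑ j : Fin 6, ∑ k : Fin 6, ⨆ g : Fin 6 → E2, t3norm (pd3 V i j k g)

/-- Finiteness of `M₂`. -/
def M2fin (V : (Fin 6 → E2) → ℝ) : Prop :=
  ∀ i j : Fin 6, BddAbove (Set.range fun g : Fin 6 → E2 => matOpNorm (pd2 V i j g))

/-- Finiteness of `M₃`. -/
def M3fin (V : (Fin 6 → E2) → ℝ) : Prop :=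
  ∀ i j k : Fin 6, BddAbove (Set.range fun g : Fin 6 → E2 => t3norm (pd3 V i j k g))

/-- The class `𝒱`: `C³` potentials with the point symmetry `V((-g_{j+3})_j) = V(g)`. -/
def memV (V : (Fin 6 → E2) → ℝ) : Prop :=
  ContDiff ℝ 3 V ∧ ∀ g : Fin 6 → E2, V (fun j => -g (j + 3)) = V g

/-- Cauchy–Born stored energy `W(F) = V(F𝐚)/Ω₀`. -/
def Wf (V : (Fin 6 → E2) → ℝ) (F : Mat2) : ℝ := V (Famat F) / Om0

/-- `∂W(F) ∈ ℝ^{2×2}`. -/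
def DW (V : (Fin 6 → E2) → ℝ) (F : Mat2) : Mat2 :=
  fun i k => deriv (fun t : ℝ => Wf V (F + t • Matrix.single i k 1)) 0

/-- The matrix `G` with `G b₁ = v₁`, `G b₂ = v₂` (for linearly independent `b₁, b₂`). -/
def solve2 (b1 b2 v1 v2 : E2) : Mat2 := fun i k =>
  (if k = 0 then v1 i * b2 1 - v2 i * b1 1 else v2 i * b1 0 - v1 i * b2 0) /
    (b1 0 * b2 1 - b1 1 * b2 0)

/-- Triangles of the canonical triangulation `𝒯`: `(n, true)` is the upward triangle
with vertices `n, n+a₁, n+a₂`, and `(n, false)` the downward triangle with vertices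
`n, n+a₁, n+a₆` (in lattice coordinates). -/
abbrev Tri := (ℤ × ℤ) × Bool

/-- The gradient `∂_T y` of the piecewise affine interpolant of `y` on `T`. -/
def triGrad (y : ℤ × ℤ → E2) (T : Tri) : Mat2 :=
  if T.2 then solve2 (avec 1) (avec 2) (Dd 1 y T.1) (Dd 2 y T.1)
  else solve2 (avec 1) (avec 6) (Dd 1 y T.1) (Dd 6 y T.1)

/-- The vertices `T ∩ ℒ` of a triangle, in lattice coordinates. -/
def triVerts (T : Tri) : Finset (ℤ × ℤ) :=
  if T.2 then {T.1, T.1 + (1, 0), T.1 + (0, 1)} else {T.1, T.1 + (1, 0), T.1 + (1, -1)}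

/-- `x_{T,j}`: the unique lattice point with `x_{T,j}, x_{T,j} + a_{j+1} ∈ T`
(here `j : Fin 6` labels the direction `a_{j+1}`). -/
def xT (T : Tri) (j : Fin 6) : ℤ × ℤ :=
  T.1 + (if T.2 then
    (match (j : ℕ) with
     | 0 => ((0 : ℤ), (0 : ℤ)) | 1 => (0, 0) | 2 => (1, 0) | 3 => (1, 0) | 4 => (0, 1) | _ => (0, 1))
  else
    (match (j : ℕ) with
     | 0 => ((0 : ℤ), (0 : ℤ)) | 1 => (1, -1) | 2 => (1, -1) | 3 => (1, 0) | 4 => (1, 0) | _ => (0, 0)))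

/-- The neighbouring triangle `T_j` of `T` sharing the edge with direction `a_{j+1}`. -/
def nbr (T : Tri) (j : Fin 6) : Tri :=
  if T.2 then
    (T.1 + (match (j : ℕ) % 3 with | 0 => ((0 : ℤ), (0 : ℤ)) | 1 => (-1, 1) | _ => (0, 1)), false)
  else
    (T.1 + (match (j : ℕ) % 3 with | 0 => ((0 : ℤ), (0 : ℤ)) | 1 => (1, -1) | _ => (0, -1)), true)

/-- The triangle `T_{x,j} = conv{x, x + a_j, x + a_{j+1}}` (index `j` mod 6). -/
def Txj (x : ℤ × ℤ) (j : ℤ) : Tri :=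
  match (j % 6).toNat with
  | 1 => (x, true)
  | 2 => (x + (-1, 1), false)
  | 3 => (x + (-1, 0), true)
  | 4 => (x + (-1, 0), false)
  | 5 => (x + (0, -1), true)
  | _ => (x, false)

/-- The Cauchy–Born site potential `V^c(g) = (Ω₀/6) Σ_j W(∂_{T_{x,j}} y)` as a function
of the six differences `g = Dy(x)`. -/
def Vc (V : (Fin 6 → E2) → ℝ) (g : Fin 6 → E2) : ℝ :=
  Om0 / 6 * ∑ j : Fin 6, Wf V (solve2 (avec ((j : ℕ) + 1)) (avec ((j : ℕ) + 2)) (g j) (g (j + 1)))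

/-- The atomistic stress `Σa(y;T)`. -/
def Sa (V : (Fin 6 → E2) → ℝ) (y : ℤ × ℤ → E2) (T : Tri) : Mat2 :=
  Om0⁻¹ • ∑ j : Fin 6, outer (pd V j (Dfam y (xT T j))) (aFam j)

/-- The continuum stress `Σc¹(y;T) = ∂W(∂_T y)`. -/
def Sc1 (V : (Fin 6 → E2) → ℝ) (y : ℤ × ℤ → E2) (T : Tri) : Mat2 := DW V (triGrad y T)

/-- The continuum stress `Σc²(y;T)`. -/
def Sc2 (V : (Fin 6 → E2) → ℝ) (y : ℤ × ℤ → E2) (T : Tri) : Mat2 :=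
  Om0⁻¹ • ∑ j : Fin 6, (2 : ℝ)⁻¹ •
    outer (pd V j (Famat (triGrad y T)) + pd V j (Famat (triGrad y (nbr T j)))) (aFam j)

/-- The continuum stress `Σc³(y;T)`. -/
def Sc3 (V : (Fin 6 → E2) → ℝ) (y : ℤ × ℤ → E2) (T : Tri) : Mat2 :=
  Om0⁻¹ • ∑ j : Fin 6, outer (pd (Vc V) j (Dfam y (xT T j))) (aFam j)

/-- The interface region `ℐ` determined by the atomistic region `𝒜`. -/
def interf (A : Set (ℤ × ℤ)) : Set (ℤ × ℤ) :=
  {x | x ∉ A ∧ ∃ j : Fin 6, x + ed ((j : ℕ) + 1) ∈ A}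

/-- The continuum region `𝒞 = ℒ ∖ (𝒜 ∪ ℐ)`. -/
def contR (A : Set (ℤ × ℤ)) : Set (ℤ × ℤ) := {x | x ∉ A ∧ x ∉ interf A}

/-- The reconstructed interface potential `V^i(g) = V((Σ_i C_{j,i} g_i)_j)`. -/
def Vi (V : (Fin 6 → E2) → ℝ) (Cp : Fin 6 → Fin 6 → ℝ) (g : Fin 6 → E2) : ℝ :=
  V fun j => ∑ i : Fin 6, Cp j i • g i

/-- The hybrid site potential `V^ac_x`. -/
def Vac (V : (Fin 6 → E2) → ℝ) (C : ℤ × ℤ → Fin 6 → Fin 6 → ℝ) (A : Set (ℤ × ℤ))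
    (x : ℤ × ℤ) : (Fin 6 → E2) → ℝ :=
  if x ∈ A then V else if x ∈ interf A then Vi V (C x) else Vc V

/-- First variation `⟨δE_a(y), u⟩` of the atomistic energy. -/
def dEa (V : (Fin 6 → E2) → ℝ) (y u : ℤ × ℤ → E2) : ℝ :=
  ∑ᶠ n : ℤ × ℤ, ∑ j : Fin 6, dotE (pd V j (Dfam y n)) (Dfam u n j)

/-- First variation `⟨δE_c(y), u⟩` of the Cauchy–Born energy. -/
def dEc (V : (Fin 6 → E2) → ℝ) (y u : ℤ × ℤ → E2) : ℝ :=
  ∑ᶠ T : Tri, Om0 / 2 * frobI (DW V (triGrad y T)) (triGrad u T)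

/-- First variation `⟨δE_ac(y), u⟩` of the a/c coupling energy. -/
def dEac (V : (Fin 6 → E2) → ℝ) (C : ℤ × ℤ → Fin 6 → Fin 6 → ℝ) (A : Set (ℤ × ℤ))
    (y u : ℤ × ℤ → E2) : ℝ :=
  ∑ᶠ n : ℤ × ℤ, ∑ i : Fin 6, dotE (pd (Vac V C A n) i (Dfam y n)) (Dfam u n i)

/-- The a/c stress `Σac(y;T)`. -/
def Sac (V : (Fin 6 → E2) → ℝ) (C : ℤ × ℤ → Fin 6 → Fin 6 → ℝ) (A : Set (ℤ × ℤ))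
    (y : ℤ × ℤ → E2) (T : Tri) : Mat2 :=
  Om0⁻¹ • ∑ j : Fin 6, outer (pd (Vac V C A (xT T j)) j (Dfam y (xT T j))) (aFam j)

/-- `u ∈ 𝒰₀`: finitely supported displacement. -/
def FinSupp (u : ℤ × ℤ → E2) : Prop := (Function.support u).Finite

/-- `y ∈ 𝒴₀`: deformation with `y - id` finitely supported. -/
def inY0 (y : ℤ × ℤ → E2) : Prop := (Function.support fun n => y n - emb n).Finite

/-- The homogeneous deformation `y_F(x) = Fx`. -/
def yhom (F : Mat2) : ℤ × ℤ → E2 := fun n => mvec F (emb n)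

/-- One-sidedness: `C_{j,i} = 0` unless `i ∈ {j-1, j, j+1}` (mod 6). -/
def oneSided (Cp : Fin 6 → Fin 6 → ℝ) : Prop :=
  ∀ j i : Fin 6, i ≠ j - 1 → i ≠ j → i ≠ j + 1 → Cp j i = 0

/-- Local energy consistency: `C_{j,j-1} = C_{j,j+1} = 1 - C_{j,j}`. -/
def eCons (Cp : Fin 6 → Fin 6 → ℝ) : Prop :=
  ∀ j : Fin 6, Cp j (j - 1) = 1 - Cp j j ∧ Cp j (j + 1) = 1 - Cp j j

/-- The coefficients corresponding to the atomistic site potential (`C_{x,j} = 1`). -/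
def atomC : Fin 6 → Fin 6 → ℝ := fun j i => if i = j then 1 else 0

/-- The coefficients corresponding to the Cauchy–Born site potential (`C_{x,j} = 2/3`). -/
def cbC : Fin 6 → Fin 6 → ℝ := fun j i =>
  if i = j then 2 / 3 else if i = j - 1 ∨ i = j + 1 then 1 / 3 else 0

/-- The negative force `-f_ac(x; y_F) = Σ_{j,i} (C_{x-a_i,j,i} - C_{x,j,i}) ∂_j V(F𝐚)`. -/
def forceSum (C : ℤ × ℤ → Fin 6 → Fin 6 → ℝ) (V : (Fin 6 → E2) → ℝ) (F : Mat2)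
    (x : ℤ × ℤ) : E2 :=
  ∑ j : Fin 6, ∑ i : Fin 6, (C (x - ed ((i : ℕ) + 1)) j i - C x j i) • pd V j (Famat F)

/-- The force consistency condition (5.2) on the coefficients. -/
def fCons (C : ℤ × ℤ → Fin 6 → Fin 6 → ℝ) : Prop :=
  ∀ j : Fin 6, (j : ℕ) < 3 → ∀ x : ℤ × ℤ,
    ∑ i : Fin 6, (C (x - ed ((i : ℕ) + 1)) j i - C (x - ed ((i : ℕ) + 1)) (j + 3) i
      - C x j i + C x (j + 3) i) = 0

/-- `|D²y(x)| = max_{i,j} |D_i D_j y(x)|`. -/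
def D2n (y : ℤ × ℤ → E2) (n : ℤ × ℤ) : ℝ :=
  ⨆ i : Fin 6, ⨆ j : Fin 6, ‖Dd ((i : ℕ) + 1) (Dd ((j : ℕ) + 1) y) n‖

/-- `|D³y(x)| = max_{i,j,k} |D_i D_j D_k y(x)|`. -/
def D3n (y : ℤ × ℤ → E2) (n : ℤ × ℤ) : ℝ :=
  ⨆ i : Fin 6, ⨆ j : Fin 6, ⨆ k : Fin 6,
    ‖Dd ((i : ℕ) + 1) (Dd ((j : ℕ) + 1) (Dd ((k : ℕ) + 1) y)) n‖

/-- `ℓ^p` norm of a lattice function over a subset `S ⊆ ℒ`. -/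
def lpNormS (p : ℝ≥0∞) (f : ℤ × ℤ → ℝ) (S : Set (ℤ × ℤ)) : ℝ :=
  if p = ⊤ then ⨆ x : S, |f x| else (∑ᶠ x ∈ S, |f x| ^ p.toReal) ^ (1 / p.toReal)

/-- `‖∂u‖_{L^q}` for the piecewise affine interpolant. -/
def gradLp (q : ℝ≥0∞) (u : ℤ × ℤ → E2) : ℝ :=
  if q = ⊤ then ⨆ T : Tri, frobN (triGrad u T)
  else (∑ᶠ T : Tri, Om0 / 2 * frobN (triGrad u T) ^ q.toReal) ^ (1 / q.toReal)

/-- `𝒯_𝒜`: triangles with `T ∩ (ℐ ∪ 𝒞) = ∅`. -/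
def TA (A : Set (ℤ × ℤ)) : Set Tri := {T | ∀ n ∈ triVerts T, n ∉ interf A ∧ n ∉ contR A}

/-- `𝒯_𝒞`: triangles with `T ∩ (ℐ ∪ 𝒜) = ∅`. -/
def TC (A : Set (ℤ × ℤ)) : Set Tri := {T | ∀ n ∈ triVerts T, n ∉ interf A ∧ n ∉ A}

/-- `𝒯_ℐ = 𝒯 ∖ (𝒯_𝒜 ∪ 𝒯_𝒞)`. -/
def TI (A : Set (ℤ × ℤ)) : Set Tri := {T | T ∉ TA A ∧ T ∉ TC A}

/-- The midpoint of the edge `(x, x + a_j)`. -/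
def edgeMid (x : ℤ × ℤ) (j : ℤ) : E2 := emb x + (2 : ℝ)⁻¹ • avec j

/-- The edge `(x, x+a_j)` belongs to `𝔉_𝒜` (it lies in a triangle of `𝒯_𝒜`). -/
def edgeInA (A : Set (ℤ × ℤ)) (x : ℤ × ℤ) (j : ℤ) : Prop :=
  Txj x j ∈ TA A ∨ Txj x (j - 1) ∈ TA A

/-- The edge `(x, x+a_j)` belongs to `𝔉_𝒞`. -/
def edgeInC (A : Set (ℤ × ℤ)) (x : ℤ × ℤ) (j : ℤ) : Prop :=
  Txj x j ∈ TC A ∨ Txj x (j - 1) ∈ TC A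

/-- Rotation by `π/2`. -/
def Jmat : Mat2 := !![0, -1; 1, 0]

/-- Midpoint continuity of a piecewise affine field: membership in `N1(𝒯)²`. -/
def midCont (ψ : Tri → E2 → E2) : Prop :=
  ∀ (x : ℤ × ℤ) (j : ℤ), ψ (Txj x j) (edgeMid x j) = ψ (Txj x (j - 1)) (edgeMid x j)

/-- `ψ` is piecewise affine with Jacobian `G T` on each triangle `T`. -/
def affWith (ψ : Tri → E2 → E2) (G : Tri → Mat2) : Prop :=
  ∀ (T : Tri) (z w : E2), ψ T z - ψ T w = mvec (G T) (z - w)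

/-- Assumption 4.1: every interface atom has exactly two interface neighbours and
at least one continuum neighbour. -/
def InterfaceOK (A : Set (ℤ × ℤ)) : Prop :=
  ∀ x ∈ interf A,
    ({j : Fin 6 | x + ed ((j : ℕ) + 1) ∈ interf A}).ncard = 2 ∧
    ∃ j : Fin 6, x + ed ((j : ℕ) + 1) ∈ contR A

/-- The patch test: local energy consistency and local force consistency for all `V ∈ 𝒱`. -/
def PatchTest (C : ℤ × ℤ → Fin 6 → Fin 6 → ℝ) (A : Set (ℤ × ℤ)) : Prop :=
  (∀ V, memV V → ∀ F : Mat2, ∀ x ∈ interf A, Vi V (C x) (Famat F) = V (Famat F)) ∧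
  (∀ V, memV V → ∀ F : Mat2, ∀ u, FinSupp u → dEac V C A (yhom F) u = 0)

/-- The closed triangle `T ⊆ ℝ²`. -/
def triSet (T : Tri) : Set E2 :=
  convexHull ℝ {emb T.1, emb (T.1 + (1, 0)), emb (T.1 + (if T.2 then ((0 : ℤ), (1 : ℤ)) else (1, -1)))}

/-- The closed edge `[x, x + a_j] ⊆ ℝ²`. -/
def edgeSeg (x : ℤ × ℤ) (j : ℤ) : Set E2 := segment ℝ (emb x) (emb (x + ed j))

/-- The atomistic region of the flat interface: `{x ∈ ℒ : x₂ < 0}`. -/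
def flatA : Set (ℤ × ℤ) := {n | emb n 1 < 0}

/-- The extended interface region `ℐ^ext = {x ∈ ℒ : dist(x, ℐ) ≤ 1}`. -/
def Iext (A : Set (ℤ × ℤ)) : Set (ℤ × ℤ) := {x | ∃ z ∈ interf A, ‖emb x - emb z‖ ≤ 1}

/-- Embedding `Fin 3 → Fin 6`. -/
def jlift (j : Fin 3) : Fin 6 := ⟨(j : ℕ), by omega⟩

end AC
/-!
Point symmetry of `V` gives `∂_{j+3}V(F𝐚) = -∂_jV(F𝐚)`, so the force at `x` is
`Σ_{j ≤ 3} (s_j - s_{j+3}) ∂_jV(F𝐚)` with `s_j = Σ_i (C_{x-a_i,j,i} - C_{x,j,i})`, and it vanishes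
whenever `s_j = s_{j+3}`. Conversely, the linear potential `g ↦ (g_j)₁ - (g_{j+3})₁` lies in `𝒱`, and
its force has first component `s_j - s_{j+3}`.
-/

namespace AC

lemma fin_six_add_three_add_three : ∀ a : Fin 6, a + 3 + 3 = a := by decide

lemma avec_add_three (j : ℤ) : avec (j + 3) = -avec j := by
  have hangle : ((j : ℝ) + 3 - 1) * (π / 3) = ((j : ℝ) - 1) * (π / 3) + π := by ring
  ext i
  fin_cases i <;> simp [avec, toE2, hangle, Real.cos_add_pi, Real.sin_add_pi]

lemma avec_add_six (j : ℤ) : avec (j + 6) = avec j := by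
  rw [show j + 6 = j + 3 + 3 by ring, avec_add_three, avec_add_three, neg_neg]

lemma aFam_add_three (l : Fin 6) : aFam (l + 3) = -aFam l := by
  fin_cases l <;> simp [aFam, ← avec_add_three]
  all_goals exact (avec_add_six _).symm

lemma mvec_neg (F : Mat2) (v : E2) : mvec F (-v) = -mvec F v := by
  ext i
  simp [mvec, toE2]

lemma Famat_add_three (F : Mat2) (l : Fin 6) : Famat F (l + 3) = -Famat F l := by
  rw [Famat, Famat, aFam_add_three, mvec_neg]

lemma neg_Famat_add_three (F : Mat2) : (fun l => -Famat F (l + 3)) = Famat F := by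
  funext l
  rw [Famat_add_three, neg_neg]

lemma unitv_add_three (j l : Fin 6) (k : Fin 2) : unitv j k (l + 3) = unitv (j + 3) k l := by
  have hshift : l + 3 = j ↔ l = j + 3 := by
    constructor <;> rintro rfl <;> simp [fin_six_add_three_add_three]
  simp only [unitv, hshift]

lemma pd_add_three_of_symm {V : (Fin 6 → E2) → ℝ} (hV : ∀ g, V (fun j => -g (j + 3)) = V g)
    (j : Fin 6) (g : Fin 6 → E2) :
    pd V (j + 3) g = -pd V j (fun l => -g (l + 3)) := by
  ext k
  have hline : (fun t : ℝ => V (g + t • unitv (j + 3) k))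
      = fun t => V ((fun l => -g (l + 3)) + (-t) • unitv j k) := by
    funext t
    rw [← hV]
    congr 1
    funext l
    simp [unitv_add_three, fin_six_add_three_add_three]
    abel
  simp only [pd, toE2, hline]
  rw [deriv_comp_neg (f := fun t : ℝ => V ((fun l => -g (l + 3)) + t • unitv j k))]
  simp

lemma pd_continuousLinearMap (L : (Fin 6 → E2) →L[ℝ] ℝ) (j : Fin 6) (g : Fin 6 → E2) :
    pd L j g = toE2 fun k => L (unitv j k) := by
  ext k
  have hline : HasDerivAt (fun t : ℝ => L (g + t • unitv j k)) (L (unitv j k)) 0 := by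
    simpa using ((hasDerivAt_id (0 : ℝ)).smul_const (L (unitv j k))).const_add (L g)
  exact hline.deriv

def slotDiff (j : Fin 6) : (Fin 6 → E2) →L[ℝ] ℝ :=
  (EuclideanSpace.proj 0).comp (ContinuousLinearMap.proj j) -
    (EuclideanSpace.proj 0).comp (ContinuousLinearMap.proj (j + 3))

lemma memV_slotDiff (j : Fin 6) : memV (slotDiff j) := by
  refine ⟨(slotDiff j).contDiff, fun g => ?_⟩
  simp [slotDiff, fin_six_add_three_add_three]
  ring

lemma pd_slotDiff_apply_zero (j j' : Fin 6) (g : Fin 6 → E2) :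
    pd (slotDiff j) j' g 0 = (if j' = j then 1 else 0) - (if j' = j + 3 then 1 else 0) := by
  rw [pd_continuousLinearMap]
  simp [slotDiff, unitv, toE2, apply_ite (fun v : E2 => v 0), eq_comm]

def forceCoeff (C : ℤ × ℤ → Fin 6 → Fin 6 → ℝ) (x : ℤ × ℤ) (j : Fin 6) : ℝ :=
  ∑ i : Fin 6, (C (x - ed ((i : ℕ) + 1)) j i - C x j i)

lemma forceSum_eq_sum_forceCoeff_smul (C : ℤ × ℤ → Fin 6 → Fin 6 → ℝ)
    (V : (Fin 6 → E2) → ℝ) (F : Mat2) (x : ℤ × ℤ) :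
    forceSum C V F x = ∑ j, forceCoeff C x j • pd V j (Famat F) := by
  simp only [forceSum, forceCoeff, Finset.sum_smul]

lemma forceSum_slotDiff_apply_zero (C : ℤ × ℤ → Fin 6 → Fin 6 → ℝ) (j : Fin 6) (F : Mat2)
    (x : ℤ × ℤ) :
    forceSum C (slotDiff j) F x 0 = forceCoeff C x j - forceCoeff C x (j + 3) := by
  simp [forceSum_eq_sum_forceCoeff_smul, pd_slotDiff_apply_zero, mul_sub]

lemma fCons_iff_forceCoeff_add_three (C : ℤ × ℤ → Fin 6 → Fin 6 → ℝ) :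
    fCons C ↔ ∀ j : Fin 6, (j : ℕ) < 3 → ∀ x, forceCoeff C x j = forceCoeff C x (j + 3) := by
  have hsum : ∀ j x, ∑ i : Fin 6, (C (x - ed ((i : ℕ) + 1)) j i
      - C (x - ed ((i : ℕ) + 1)) (j + 3) i - C x j i + C x (j + 3) i)
      = forceCoeff C x j - forceCoeff C x (j + 3) := by
    intro j x
    rw [forceCoeff, forceCoeff, ← Finset.sum_sub_distrib]
    exact Finset.sum_congr rfl fun i _ => by ring
  simp only [fCons, hsum, sub_eq_zero]

lemma sum_fin_six_eq_zero_of_add_three_eq_neg {M : Type*} [AddCommGroup M] (f : Fin 6 → M)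
    (hf : ∀ j : Fin 6, (j : ℕ) < 3 → f (j + 3) = -f j) : ∑ j, f j = 0 := by
  have h3 : f 3 = -f 0 := hf 0 (by decide)
  have h4 : f 4 = -f 1 := hf 1 (by decide)
  have h5 : f 5 = -f 2 := hf 2 (by decide)
  rw [Fin.sum_univ_six, h3, h4, h5]
  abel

end AC

open AC in
theorem force_consistency_characterisation_general
    (C : ℤ × ℤ → Fin 6 → Fin 6 → ℝ) :
    (∀ V : (Fin 6 → E2) → ℝ, memV V → ∀ F : Mat2, ∀ x : ℤ × ℤ, forceSum C V F x = 0) ↔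
      fCons C := by
  rw [fCons_iff_forceCoeff_add_three]
  constructor
  · intro hforce j _ x
    have h := forceSum_slotDiff_apply_zero C j 0 x
    rw [hforce _ (memV_slotDiff j), PiLp.zero_apply, eq_comm, sub_eq_zero] at h
    exact h
  · intro hcoeff V hV F x
    rw [forceSum_eq_sum_forceCoeff_smul]
    refine sum_fin_six_eq_zero_of_add_three_eq_neg _ fun j hj => ?_
    rw [← hcoeff j hj x, pd_add_three_of_symm hV.2, neg_Famat_add_three, smul_neg]

open AC in
/-- characterisation of local force consistency (Lemma 3.3). -/
theorem force_consistency_characterisation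
    (A : Set (ℤ × ℤ)) (C : ℤ × ℤ → Fin 6 → Fin 6 → ℝ)
    (hI : ∀ x ∈ interf A, oneSided (C x) ∧ eCons (C x))
    (hA : ∀ x ∈ A, C x = atomC)
    (hC : ∀ x ∈ contR A, C x = cbC) :
    (∀ V : (Fin 6 → E2) → ℝ, memV V → ∀ F : Mat2, ∀ x : ℤ × ℤ, forceSum C V F x = 0) ↔
      fCons C :=
  force_consistency_characterisation_general C
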